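/- In the multigraph construction described (with positive integers s_1, …, s_T summing to 2B and B > 2), an EFX orientation exists if and only if there exists a subset I ⊆ {1, …, T} with Σ_{v∈I} s_v = B. -/
import Mathlib


/-- Agents (vertices) of the multigraph construction of Theorem 5: the two special agents
`I` and `J`, and the gadget agents `X h k` for `h ∈ {1,2}` (indexed by `Fin 2`) and
`k ∈ {1,2,3,4}` (indexed by `Fin 4`). -/
inductive Agent (T : ℕ) where
  | I : Agent T
  | J : Agent T
  | X : Fin 2 → Fin 4 → Agent T
deriving DecidableEq

/-- Items (edges) of the multigraph construction: the parallel edges `e v` between `I`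
and `J` (of weight `s v`) for `v ∈ {1,…,T}`, the six clique edges `g h e` of each gadget
`h` (indexed by `e : Fin 6`), and the connecting edges `iX = {i, X_{1,1}}` and
`jX = {j, X_{2,1}}` of weight `B`. -/
inductive Item (T : ℕ) where
  | e : Fin T → Item T
  | g : Fin 2 → Fin 6 → Item T
  | iX : Item T
  | jX : Item T
deriving DecidableEq

/-- The pair of gadget-vertex indices joined by the `e`-th clique edge: the six edges of
the clique on `{0,1,2,3}` are `01, 02, 03, 12, 13, 23`. -/
def cliquePair : Fin 6 → Fin 4 × Fin 4
  | 0 => (0, 1)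
  | 1 => (0, 2)
  | 2 => (0, 3)
  | 3 => (1, 2)
  | 4 => (1, 3)
  | 5 => (2, 3)

/-- The two endpoints of each edge of the construction. -/
def endpoints {T : ℕ} : Item T → Agent T × Agent T
  | .e _ => (.I, .J)
  | .g h e => (.X h (cliquePair e).1, .X h (cliquePair e).2)
  | .iX => (.I, .X 0 0)
  | .jX => (.J, .X 1 0)

/-- The weight of each edge: the parallel edge `e v` between `i` and `j` has weight
`s v`; in each gadget the edges `{X_{h,1},X_{h,2}}` (index `0`) and `{X_{h,3},X_{h,4}}`
(index `5`) have weight `B` and the four remaining clique edges have weight `1`; the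
edges `{i,X_{1,1}}` and `{j,X_{2,1}}` have weight `B`. -/
noncomputable def wt {T : ℕ} (s : Fin T → ℤ) (B : ℤ) : Item T → ℝ
  | .e v => (s v : ℝ)
  | .g _ e => if e = 0 ∨ e = 5 then (B : ℝ) else 1
  | .iX => (B : ℝ)
  | .jX => (B : ℝ)

/-- Additive symmetric valuations: an agent values an edge at its weight if the agent is
one of its endpoints and at `0` otherwise. -/
noncomputable def val {T : ℕ} (s : Fin T → ℤ) (B : ℤ) (u : Agent T) (a : Item T) : ℝ :=
  if u = (endpoints a).1 ∨ u = (endpoints a).2 then wt s B a else 0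

/-- The value of an agent for a bundle of edges. -/
noncomputable def bval {T : ℕ} (s : Fin T → ℤ) (B : ℤ) (u : Agent T)
    (S : Finset (Item T)) : ℝ :=
  ∑ a ∈ S, val s B u a


namespace EFXAux

variable {T : ℕ} {s : Fin T → ℤ} {B : ℤ}

lemma wt_nonneg (hpos : ∀ v, 0 < s v) (hB : (2:ℤ) < B) (a : Item T) :
    0 ≤ wt s B a := by
  rcases a with v | ⟨h, e⟩ | _ | _ <;> simp [wt]
  · exact_mod_cast (hpos v).le
  · split
    · exact_mod_cast (by linarith : (0:ℤ) ≤ B)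
    · norm_num
  · exact_mod_cast (by linarith : (0:ℤ) ≤ B)
  · exact_mod_cast (by linarith : (0:ℤ) ≤ B)

lemma val_nonneg (hpos : ∀ v, 0 < s v) (hB : (2:ℤ) < B) (u : Agent T) (a : Item T) :
    0 ≤ val s B u a := by
  unfold val; split
  · exact wt_nonneg hpos hB a
  · exact le_refl 0

lemma bval_mono (hpos : ∀ v, 0 < s v) (hB : (2:ℤ) < B) (u : Agent T)
    {S S' : Finset (Item T)} (h : S ⊆ S') : bval s B u S ≤ bval s B u S' :=
  Finset.sum_le_sum_of_subset_of_nonneg h (fun a _ _ => val_nonneg hpos hB u a)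

lemma le_bval_of_mem (hpos : ∀ v, 0 < s v) (hB : (2:ℤ) < B) (u : Agent T)
    {S : Finset (Item T)} {a : Item T} (h : a ∈ S) : val s B u a ≤ bval s B u S :=
  Finset.single_le_sum (fun a _ => val_nonneg hpos hB u a) h

lemma val_fst (s : Fin T → ℤ) (B : ℤ) (a : Item T) :
    val s B (endpoints a).1 a = wt s B a := by simp [val]

lemma val_snd (s : Fin T → ℤ) (B : ℤ) (a : Item T) :
    val s B (endpoints a).2 a = wt s B a := by simp [val]

/-- owner index inside a gadget for each clique edge in the backward construction. -/
def oIdx : Fin 6 → Fin 4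
  | 0 => 1
  | 1 => 0
  | 2 => 3
  | 3 => 1
  | 4 => 1
  | 5 => 2

def conn (T : ℕ) : Fin 2 → Item T := fun h => if h = 0 then .iX else .jX

/-- Owner of each item in the backward construction. -/
def owner (I₀ : Finset (Fin T)) : Item T → Agent T
  | .e v => if v ∈ I₀ then .I else .J
  | .g h e => .X h (oIdx e)
  | .iX => .X 0 0
  | .jX => .X 1 0

/-- The allocation of the backward construction. -/
def pi (I₀ : Finset (Fin T)) : Agent T → Finset (Item T)
  | .I => I₀.image .e
  | .J => I₀ᶜ.image .e
  | .X h k =>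
      if k = 0 then {conn T h, .g h 1}
      else if k = 1 then {.g h 0, .g h 3, .g h 4}
      else if k = 2 then {.g h 5} else {.g h 2}

lemma g_ne_conn (h h' : Fin 2) (e' : Fin 6) : (Item.g h' e' : Item T) ≠ conn T h := by
  unfold conn; split <;> simp

lemma e_ne_conn (h : Fin 2) (v : Fin T) : (Item.e v : Item T) ≠ conn T h := by
  unfold conn; split <;> simp

lemma mem_pi (I₀ : Finset (Fin T)) (a : Item T) (u : Agent T) :
    a ∈ pi I₀ u ↔ owner I₀ a = u := by
  rcases u with _ | _ | ⟨h, k⟩ <;> rcases a with v | ⟨h', e'⟩ | _ | _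
  · simp only [pi, owner, Finset.mem_image, Item.e.injEq]
    split_ifs <;> simp_all
  · simp only [pi, owner, Finset.mem_image]; simp
  · simp [pi, owner]
  · simp [pi, owner]
  · simp only [pi, owner, Finset.mem_image, Item.e.injEq]
    split_ifs <;> simp_all
  · simp only [pi, owner, Finset.mem_image]; simp
  · simp [pi, owner]
  · simp [pi, owner]
  · have := e_ne_conn (T := T) h v
    simp only [pi, owner]
    split_ifs <;> simp_all
  · have := g_ne_conn (T := T) h h' e'
    fin_cases k <;> fin_cases e' <;> simp_all [pi, owner, oIdx]
  · fin_cases h <;> fin_cases k <;> simp [pi, owner, conn]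
  · fin_cases h <;> fin_cases k <;> simp [pi, owner, conn]

lemma bval_nonneg (hpos : ∀ v, 0 < s v) (hB : (2:ℤ) < B) (u : Agent T)
    (S : Finset (Item T)) : 0 ≤ bval s B u S :=
  Finset.sum_nonneg (fun a _ => val_nonneg hpos hB u a)

lemma bval_I_image (S : Finset (Fin T)) :
    bval s B .I (S.image .e) = ∑ v ∈ S, (s v : ℝ) := by
  unfold bval
  rw [Finset.sum_image (by simp)]
  simp [val, endpoints, wt]

lemma bval_J_image (S : Finset (Fin T)) :
    bval s B .J (S.image .e) = ∑ v ∈ S, (s v : ℝ) := by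
  unfold bval
  rw [Finset.sum_image (by simp)]
  simp [val, endpoints, wt]

lemma bval_X_image (h : Fin 2) (k : Fin 4) (S : Finset (Fin T)) :
    bval s B (.X h k) (S.image .e) = 0 := by
  unfold bval
  refine Finset.sum_eq_zero fun a ha => ?_
  obtain ⟨v, -, rfl⟩ := Finset.mem_image.mp ha
  simp [val, endpoints]

set_option maxHeartbeats 2000000 in
lemma backward (hpos : ∀ v, 0 < s v) (hsum : ∑ v : Fin T, s v = 2 * B)
    (hB : (2:ℤ) < B) (I₀ : Finset (Fin T)) (hI₀ : ∑ v ∈ I₀, s v = B) :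
    (∀ u w : Agent T, u ≠ w → Disjoint (pi I₀ u) (pi I₀ w)) ∧
    (∀ a : Item T, ∃ u : Agent T, a ∈ pi I₀ u) ∧
    (∀ u : Agent T, ∀ a ∈ pi I₀ u, u = (endpoints a).1 ∨ u = (endpoints a).2) ∧
    (∀ u w : Agent T, ∀ a ∈ pi I₀ w,
      bval s B u (pi I₀ u) ≥ bval s B u ((pi I₀ w).erase a)) := by
  have hBr : (2:ℝ) < (B:ℝ) := by exact_mod_cast hB
  have hcomp : ∑ v ∈ I₀ᶜ, s v = B := by
    have := Finset.sum_add_sum_compl I₀ s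
    omega
  refine ⟨?_, ?_, ?_, ?_⟩
  · intro u w huw
    rw [Finset.disjoint_left]
    intro a hau haw
    rw [mem_pi] at hau haw
    exact huw (hau ▸ haw)
  · intro a
    exact ⟨owner I₀ a, (mem_pi I₀ a _).2 rfl⟩
  · intro u a ha
    rw [mem_pi] at ha
    subst ha
    rcases a with v | ⟨h', e'⟩ | _ | _
    · simp only [owner, endpoints]
      split_ifs <;> simp
    · fin_cases e' <;> simp [owner, endpoints, oIdx, cliquePair]
    · simp [owner, endpoints]
    · simp [owner, endpoints]
  · intro u w a ha
    have key : bval s B u ((pi I₀ w).erase a) ≤ bval s B u (pi I₀ w) :=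
      bval_mono hpos hB u (Finset.erase_subset _ _)
    have hBB : bval s B .I (pi I₀ .I) = (B:ℝ) := by
      simp only [pi, bval_I_image]; rw [← hI₀]; push_cast; ring
    have hJJ : bval s B .J (pi I₀ .J) = (B:ℝ) := by
      simp only [pi, bval_J_image]; rw [← hcomp]; push_cast; ring
    rcases u with _ | _ | ⟨h, k⟩ <;> rcases w with _ | _ | ⟨h', k'⟩
    -- u = I, w = I
    · exact ge_trans (le_of_eq (by simp only [pi, bval_I_image])) key
    -- u = I, w = J
    · refine ge_trans ?_ key
      rw [hBB]
      have : bval s B .I (pi I₀ .J) = (B:ℝ) := by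
        simp only [pi]
        have : bval s B (.I) (I₀ᶜ.image .e) = ∑ v ∈ I₀ᶜ, (s v:ℝ) := bval_I_image _
        rw [this, ← hcomp]; push_cast; ring
      rw [this]
    -- u = I, w = X h' k'
    · refine ge_trans ?_ key
      rw [hBB]
      fin_cases h' <;> fin_cases k' <;>
        simp [pi, bval, val, endpoints, wt, cliquePair, conn, Finset.sum_insert] <;>
        linarith
    -- u = J, w = I
    · refine ge_trans ?_ key
      rw [hJJ]
      have : bval s B .J (pi I₀ .I) = (B:ℝ) := by
        simp only [pi]
        have : bval s B (.J) (I₀.image .e) = ∑ v ∈ I₀, (s v:ℝ) := bval_J_image _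
        rw [this, ← hI₀]; push_cast; ring
      rw [this]
    -- u = J, w = J
    · exact ge_trans (le_of_eq (by simp only [pi, bval_J_image])) key
    -- u = J, w = X h' k'
    · refine ge_trans ?_ key
      rw [hJJ]
      fin_cases h' <;> fin_cases k' <;>
        simp [pi, bval, val, endpoints, wt, cliquePair, conn, Finset.sum_insert] <;>
        linarith
    -- u = X h k, w = I
    · refine ge_trans ?_ key
      simp only [pi, bval_X_image]
      exact bval_nonneg hpos hB _ _
    -- u = X h k, w = J
    · refine ge_trans ?_ key
      simp only [pi, bval_X_image]
      exact bval_nonneg hpos hB _ _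
    -- u = X h k, w = X h' k'
    · fin_cases h <;> fin_cases h' <;> fin_cases k <;> fin_cases k' <;>
        first
        | (refine ge_trans ?_ key
           simp [pi, bval, val, endpoints, wt, cliquePair, conn, Finset.sum_insert] <;>
             linarith)
        | (obtain rfl : a = Item.g _ 5 := by simpa [pi] using ha
           simp [pi, bval, Finset.erase_singleton, val, endpoints, wt, cliquePair] <;>
             linarith)


def spA (T : ℕ) : Fin 2 → Agent T := fun h => if h = 0 then .I else .J

lemma endpoints_conn (h : Fin 2) :
    endpoints (conn T h) = (spA T h, Agent.X h 0) := by
  fin_cases h <;> simp [conn, spA, endpoints]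

lemma spA_ne_X (h h' : Fin 2) (k : Fin 4) : spA T h ≠ Agent.X h' k := by
  unfold spA; split <;> simp

lemma wt_conn (s : Fin T → ℤ) (B : ℤ) (h : Fin 2) : wt s B (conn T h) = (B:ℝ) := by
  fin_cases h <;> simp [conn, wt]

section Forward

variable {π : Agent T → Finset (Item T)}

lemma uniq (hdisj : ∀ u w : Agent T, u ≠ w → Disjoint (π u) (π w))
    {a : Item T} {u w : Agent T} (hu : a ∈ π u) (hw : a ∈ π w) : u = w := by
  by_contra hne
  exact Finset.disjoint_left.mp (hdisj u w hne) hu hw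

lemma loc (hcov : ∀ a : Item T, ∃ u : Agent T, a ∈ π u)
    (hown : ∀ u : Agent T, ∀ a ∈ π u, u = (endpoints a).1 ∨ u = (endpoints a).2)
    (a : Item T) : a ∈ π (endpoints a).1 ∨ a ∈ π (endpoints a).2 := by
  obtain ⟨u, hu⟩ := hcov a
  rcases hown u a hu with h | h
  · exact Or.inl (h ▸ hu)
  · exact Or.inr (h ▸ hu)

lemma sub_incident
    (hown : ∀ u : Agent T, ∀ a ∈ π u, u = (endpoints a).1 ∨ u = (endpoints a).2)
    (h : Fin 2) (k : Fin 4) {a : Item T} (ha : a ∈ π (Agent.X h k)) :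
    (k = 0 ∧ (a = conn T h ∨ a = .g h 0 ∨ a = .g h 1 ∨ a = .g h 2)) ∨
    (k = 1 ∧ (a = .g h 0 ∨ a = .g h 3 ∨ a = .g h 4)) ∨
    (k = 2 ∧ (a = .g h 1 ∨ a = .g h 3 ∨ a = .g h 5)) ∨
    (k = 3 ∧ (a = .g h 2 ∨ a = .g h 4 ∨ a = .g h 5)) := by
  have H := hown _ a ha
  rcases a with v | ⟨h', e'⟩ | _ | _
  · simp [endpoints] at H
  · simp only [endpoints, Agent.X.injEq] at H
    fin_cases e' <;>
      simp only [cliquePair] at H <;>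
      rcases H with ⟨rfl, rfl⟩ | ⟨rfl, rfl⟩ <;> simp
  · simp only [endpoints, Agent.X.injEq] at H
    rcases H with H | ⟨rfl, rfl⟩
    · simp at H
    · simp [conn]
  · simp only [endpoints, Agent.X.injEq] at H
    rcases H with H | ⟨rfl, rfl⟩
    · simp at H
    · simp [conn]

end Forward

section Gadget

variable {π : Agent T → Finset (Item T)}
variable (hpos : ∀ v, 0 < s v) (hB : (2:ℤ) < B)
variable (hdisj : ∀ u w : Agent T, u ≠ w → Disjoint (π u) (π w))
variable (hcov : ∀ a : Item T, ∃ u : Agent T, a ∈ π u)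
variable (hown : ∀ u : Agent T, ∀ a ∈ π u, u = (endpoints a).1 ∨ u = (endpoints a).2)
variable (hefx : ∀ u w : Agent T, ∀ a ∈ π w,
    bval s B u (π u) ≥ bval s B u ((π w).erase a))

include hpos hB hefx in
lemma two_items {u w : Agent T} {a a' : Item T} (ha : a ∈ π w) (ha' : a' ∈ π w)
    (hne : a' ≠ a) : val s B u a' ≤ bval s B u (π u) :=
  le_trans (le_bval_of_mem hpos hB u (Finset.mem_erase.mpr ⟨hne, ha'⟩)) (hefx u w a ha)

include hown in
lemma sub_X1 (h : Fin 2) {a : Item T} (ha : a ∈ π (Agent.X h 1)) :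
    a = .g h 0 ∨ a = .g h 3 ∨ a = .g h 4 := by
  have := sub_incident hown h 1 ha; simp at this; tauto

include hown in
lemma sub_X2 (h : Fin 2) {a : Item T} (ha : a ∈ π (Agent.X h 2)) :
    a = .g h 1 ∨ a = .g h 3 ∨ a = .g h 5 := by
  have := sub_incident hown h 2 ha; simp at this; tauto

include hown in
lemma sub_X3 (h : Fin 2) {a : Item T} (ha : a ∈ π (Agent.X h 3)) :
    a = .g h 2 ∨ a = .g h 4 ∨ a = .g h 5 := by
  have := sub_incident hown h 3 ha; simp at this; tauto

include hown in
lemma sub_X0 (h : Fin 2) {a : Item T} (ha : a ∈ π (Agent.X h 0)) :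
    a = conn T h ∨ a = .g h 0 ∨ a = .g h 1 ∨ a = .g h 2 := by
  have := sub_incident hown h 0 ha; simp at this; tauto

include hpos hB hown in
lemma ub_X3 (h : Fin 2) (h5 : Item.g h 5 ∉ π (Agent.X h 3)) :
    bval s B (Agent.X h 3) (π (Agent.X h 3)) ≤ 2 := by
  have hsub : π (Agent.X h 3) ⊆ {Item.g h 2, Item.g h 4} := by
    intro a ha
    rcases sub_X3 hown h ha with rfl | rfl | rfl
    · simp
    · simp
    · exact absurd ha h5
  refine le_trans (bval_mono hpos hB _ hsub) (le_of_eq ?_)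
  rw [bval, Finset.sum_pair (by simp)]
  simp [val, endpoints, wt, cliquePair]
  norm_num

include hpos hB hown in
lemma ub_X2 (h : Fin 2) (h5 : Item.g h 5 ∉ π (Agent.X h 2)) :
    bval s B (Agent.X h 2) (π (Agent.X h 2)) ≤ 2 := by
  have hsub : π (Agent.X h 2) ⊆ {Item.g h 1, Item.g h 3} := by
    intro a ha
    rcases sub_X2 hown h ha with rfl | rfl | rfl
    · simp
    · simp
    · exact absurd ha h5
  refine le_trans (bval_mono hpos hB _ hsub) (le_of_eq ?_)
  rw [bval, Finset.sum_pair (by simp)]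
  simp [val, endpoints, wt, cliquePair]
  norm_num

include hpos hB hown in
lemma ub_X1 (h : Fin 2) (h0 : Item.g h 0 ∉ π (Agent.X h 1)) :
    bval s B (Agent.X h 1) (π (Agent.X h 1)) ≤ 2 := by
  have hsub : π (Agent.X h 1) ⊆ {Item.g h 3, Item.g h 4} := by
    intro a ha
    rcases sub_X1 hown h ha with rfl | rfl | rfl
    · exact absurd ha h0
    · simp
    · simp
  refine le_trans (bval_mono hpos hB _ hsub) (le_of_eq ?_)
  rw [bval, Finset.sum_pair (by simp)]
  simp [val, endpoints, wt, cliquePair]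
  norm_num

include hpos hB hown in
lemma ub_X0 (h : Fin 2) (h0 : Item.g h 0 ∉ π (Agent.X h 0))
    (hc : conn T h ∉ π (Agent.X h 0)) :
    bval s B (Agent.X h 0) (π (Agent.X h 0)) ≤ 2 := by
  have hsub : π (Agent.X h 0) ⊆ {Item.g h 1, Item.g h 2} := by
    intro a ha
    rcases sub_X0 hown h ha with rfl | rfl | rfl | rfl
    · exact absurd ha hc
    · exact absurd ha h0
    · simp
    · simp
  refine le_trans (bval_mono hpos hB _ hsub) (le_of_eq ?_)
  rw [bval, Finset.sum_pair (by simp)]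
  simp [val, endpoints, wt, cliquePair]
  norm_num

include hdisj in
lemma not_mem_other {a : Item T} {u w : Agent T} (hu : a ∈ π u) (hne : u ≠ w) :
    a ∉ π w := fun hw => hne (uniq hdisj hu hw)

include hpos hB hdisj hcov hown hefx in
lemma g0_mem_X1 (h : Fin 2) : Item.g h 0 ∈ π (Agent.X h 1) := by
  have hBr : (2:ℝ) < (B:ℝ) := by exact_mod_cast hB
  by_contra h0
  have h0' : Item.g h 0 ∈ π (Agent.X h 0) := by
    have := loc hcov hown (Item.g h 0)
    simp only [endpoints, cliquePair] at this
    tauto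
  have hub1 : bval s B (Agent.X h 1) (π (Agent.X h 1)) ≤ 2 := ub_X1 hpos hB hown h h0
  have hvg0 : val s B (Agent.X h 1) (Item.g h 0) = (B:ℝ) := by
    simp [val, endpoints, cliquePair, wt]
  have loc5 := loc hcov hown (Item.g h 5)
  simp only [endpoints, cliquePair] at loc5
  rcases loc5 with h5 | h5
  · have loc1 := loc hcov hown (Item.g h 1)
    simp only [endpoints, cliquePair] at loc1
    rcases loc1 with h1 | h1
    · have := two_items hpos hB hefx (u := Agent.X h 1) h1 h0' (by simp)
      rw [hvg0] at this; linarith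
    · have hkey := two_items hpos hB hefx (u := Agent.X h 3) h1 h5 (by simp)
      have hv : val s B (Agent.X h 3) (Item.g h 5) = (B:ℝ) := by
        simp [val, endpoints, cliquePair, wt]
      rw [hv] at hkey
      have h5' : Item.g h 5 ∉ π (Agent.X h 3) := not_mem_other hdisj h5 (by simp)
      have := ub_X3 hpos hB hown h h5'
      linarith
  · have loc2 := loc hcov hown (Item.g h 2)
    simp only [endpoints, cliquePair] at loc2
    rcases loc2 with h2 | h2
    · have := two_items hpos hB hefx (u := Agent.X h 1) h2 h0' (by simp)
      rw [hvg0] at this; linarith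
    · have hkey := two_items hpos hB hefx (u := Agent.X h 2) h2 h5 (by simp)
      have hv : val s B (Agent.X h 2) (Item.g h 5) = (B:ℝ) := by
        simp [val, endpoints, cliquePair, wt]
      rw [hv] at hkey
      have h5' : Item.g h 5 ∉ π (Agent.X h 2) := not_mem_other hdisj h5 (by simp)
      have := ub_X2 hpos hB hown h h5'
      linarith

include hpos hB hdisj hcov hown hefx in
lemma conn_mem_X0 (h : Fin 2) : conn T h ∈ π (Agent.X h 0) := by
  have hBr : (2:ℝ) < (B:ℝ) := by exact_mod_cast hB
  by_contra hc
  have hg0 : Item.g h 0 ∈ π (Agent.X h 1) := g0_mem_X1 hpos hB hdisj hcov hown hefx h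
  have hub0 : bval s B (Agent.X h 0) (π (Agent.X h 0)) ≤ 2 :=
    ub_X0 hpos hB hown h (not_mem_other hdisj hg0 (by simp)) hc
  have hvg0 : val s B (Agent.X h 0) (Item.g h 0) = (B:ℝ) := by
    simp [val, endpoints, cliquePair, wt]
  have loc5 := loc hcov hown (Item.g h 5)
  simp only [endpoints, cliquePair] at loc5
  rcases loc5 with h5 | h5
  · have loc3 := loc hcov hown (Item.g h 3)
    simp only [endpoints, cliquePair] at loc3
    rcases loc3 with h3 | h3
    · have := two_items hpos hB hefx (u := Agent.X h 0) h3 hg0 (by simp)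
      rw [hvg0] at this; linarith
    · have hkey := two_items hpos hB hefx (u := Agent.X h 3) h3 h5 (by simp)
      have hv : val s B (Agent.X h 3) (Item.g h 5) = (B:ℝ) := by
        simp [val, endpoints, cliquePair, wt]
      rw [hv] at hkey
      have h5' : Item.g h 5 ∉ π (Agent.X h 3) := not_mem_other hdisj h5 (by simp)
      have := ub_X3 hpos hB hown h h5'
      linarith
  · have loc4 := loc hcov hown (Item.g h 4)
    simp only [endpoints, cliquePair] at loc4
    rcases loc4 with h4 | h4
    · have := two_items hpos hB hefx (u := Agent.X h 0) h4 hg0 (by simp)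
      rw [hvg0] at this; linarith
    · have hkey := two_items hpos hB hefx (u := Agent.X h 2) h4 h5 (by simp)
      have hv : val s B (Agent.X h 2) (Item.g h 5) = (B:ℝ) := by
        simp [val, endpoints, cliquePair, wt]
      rw [hv] at hkey
      have h5' : Item.g h 5 ∉ π (Agent.X h 2) := not_mem_other hdisj h5 (by simp)
      have := ub_X2 hpos hB hown h h5'
      linarith

include hpos hB hdisj hcov hown hefx in
lemma second_item (h : Fin 2) : ∃ a ∈ π (Agent.X h 0), a ≠ conn T h := by
  have hBr : (2:ℝ) < (B:ℝ) := by exact_mod_cast hB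
  by_contra hno
  push_neg at hno
  have h1 : Item.g h 1 ∉ π (Agent.X h 0) := fun hm => g_ne_conn h h 1 (hno _ hm)
  have h2 : Item.g h 2 ∉ π (Agent.X h 0) := fun hm => g_ne_conn h h 2 (hno _ hm)
  have h1' : Item.g h 1 ∈ π (Agent.X h 2) := by
    have := loc hcov hown (Item.g h 1)
    simp only [endpoints, cliquePair] at this
    tauto
  have h2' : Item.g h 2 ∈ π (Agent.X h 3) := by
    have := loc hcov hown (Item.g h 2)
    simp only [endpoints, cliquePair] at this
    tauto
  have loc5 := loc hcov hown (Item.g h 5)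
  simp only [endpoints, cliquePair] at loc5
  rcases loc5 with h5 | h5
  · have hkey := two_items hpos hB hefx (u := Agent.X h 3) h1' h5 (by simp)
    have hv : val s B (Agent.X h 3) (Item.g h 5) = (B:ℝ) := by
      simp [val, endpoints, cliquePair, wt]
    rw [hv] at hkey
    have h5' : Item.g h 5 ∉ π (Agent.X h 3) := not_mem_other hdisj h5 (by simp)
    have := ub_X3 hpos hB hown h h5'
    linarith
  · have hkey := two_items hpos hB hefx (u := Agent.X h 2) h2' h5 (by simp)
    have hv : val s B (Agent.X h 2) (Item.g h 5) = (B:ℝ) := by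
      simp [val, endpoints, cliquePair, wt]
    rw [hv] at hkey
    have h5' : Item.g h 5 ∉ π (Agent.X h 2) := not_mem_other hdisj h5 (by simp)
    have := ub_X2 hpos hB hown h h5'
    linarith

include hpos hB hdisj hcov hown hefx in
lemma spA_big (h : Fin 2) : (B:ℝ) ≤ bval s B (spA T h) (π (spA T h)) := by
  obtain ⟨a, ha, hane⟩ := second_item hpos hB hdisj hcov hown hefx h
  have hc := conn_mem_X0 hpos hB hdisj hcov hown hefx h
  have hkey := two_items hpos hB hefx (u := spA T h) ha hc (Ne.symm hane)
  have hv : val s B (spA T h) (conn T h) = (B:ℝ) := by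
    fin_cases h <;> simp [spA, conn, val, endpoints, wt]
  rw [hv] at hkey
  exact hkey

include hpos hB hdisj hcov hown hefx in
lemma forward (hsum : ∑ v : Fin T, s v = 2 * B) :
    ∃ I₀ : Finset (Fin T), ∑ v ∈ I₀, s v = B := by
  classical
  set I₀ := Finset.univ.filter (fun v => Item.e v ∈ π Agent.I) with hI₀def
  set J₀ := Finset.univ.filter (fun v => Item.e v ∈ π Agent.J) with hJ₀def
  have hiX : (Item.iX : Item T) ∈ π (Agent.X 0 0) := by
    have := conn_mem_X0 hpos hB hdisj hcov hown hefx 0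
    simpa [conn] using this
  have hjX : (Item.jX : Item T) ∈ π (Agent.X 1 0) := by
    have := conn_mem_X0 hpos hB hdisj hcov hown hefx 1
    simpa [conn] using this
  have hIim : π Agent.I = I₀.image Item.e := by
    ext a
    simp only [Finset.mem_image, hI₀def, Finset.mem_filter, Finset.mem_univ, true_and]
    constructor
    · intro ha
      have hE := hown _ a ha
      rcases a with v | ⟨h', e'⟩ | _ | _
      · exact ⟨v, ha, rfl⟩
      · simp [endpoints] at hE
      · exact absurd ha (not_mem_other hdisj hiX (by simp))
      · simp [endpoints] at hE
    · rintro ⟨v, hv, rfl⟩; exact hv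
  have hJim : π Agent.J = J₀.image Item.e := by
    ext a
    simp only [Finset.mem_image, hJ₀def, Finset.mem_filter, Finset.mem_univ, true_and]
    constructor
    · intro ha
      have hE := hown _ a ha
      rcases a with v | ⟨h', e'⟩ | _ | _
      · exact ⟨v, ha, rfl⟩
      · simp [endpoints] at hE
      · simp [endpoints] at hE
      · exact absurd ha (not_mem_other hdisj hjX (by simp))
    · rintro ⟨v, hv, rfl⟩; exact hv
  have hIB : (B:ℝ) ≤ ∑ v ∈ I₀, (s v : ℝ) := by
    have := spA_big hpos hB hdisj hcov hown hefx 0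
    simp only [spA, show ((0:Fin 2) = 0) = True by simp, if_true] at this
    rwa [hIim, bval_I_image] at this
  have hJB : (B:ℝ) ≤ ∑ v ∈ J₀, (s v : ℝ) := by
    have := spA_big hpos hB hdisj hcov hown hefx 1
    simp only [spA, show ((1:Fin 2) = 0) = False by simp, if_false] at this
    rwa [hJim, bval_J_image] at this
  have hIB' : B ≤ ∑ v ∈ I₀, s v := by exact_mod_cast hIB
  have hJB' : B ≤ ∑ v ∈ J₀, s v := by exact_mod_cast hJB
  have hcompl : J₀ = I₀ᶜ := by
    ext v
    simp only [hI₀def, hJ₀def, Finset.mem_compl, Finset.mem_filter, Finset.mem_univ,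
      true_and]
    constructor
    · intro hJ hI
      exact absurd (uniq hdisj hI hJ) (by simp)
    · intro hI
      have := loc hcov hown (Item.e v)
      simp only [endpoints] at this
      tauto
  have hsplit : ∑ v ∈ I₀, s v + ∑ v ∈ J₀, s v = 2 * B := by
    rw [hcompl, Finset.sum_add_sum_compl, hsum]
  exact ⟨I₀, by omega⟩

end Gadget

end EFXAux


/-- For positive integers `s 1, …, s T` summing to `2B`, with `B > 2`,
the constructed multigraph instance admits an EFX orientation (an allocation of every
edge to one of its endpoints that is envy-free up to any good) if and only if some subset
of the `s v` sums to `B`. -/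
theorem efx_orientation_iff_partition_multigraph
    (T : ℕ) (hT : 0 < T) (s : Fin T → ℤ) (B : ℤ)
    (hpos : ∀ v : Fin T, 0 < s v) (hsum : ∑ v : Fin T, s v = 2 * B)
    (hB : 2 < B) :
    (∃ π : Agent T → Finset (Item T),
        (∀ u w : Agent T, u ≠ w → Disjoint (π u) (π w)) ∧
        (∀ a : Item T, ∃ u : Agent T, a ∈ π u) ∧
        (∀ u : Agent T, ∀ a ∈ π u, u = (endpoints a).1 ∨ u = (endpoints a).2) ∧
        (∀ u w : Agent T, ∀ a ∈ π w,
          bval s B u (π u) ≥ bval s B u ((π w).erase a))) ↔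
      ∃ I : Finset (Fin T), ∑ v ∈ I, s v = B := by
  constructor
  · rintro ⟨π, hdisj, hcov, hown, hefx⟩
    exact EFXAux.forward hpos hB hdisj hcov hown hefx hsum
  · rintro ⟨I₀, hI₀⟩
    exact ⟨EFXAux.pi I₀, EFXAux.backward hpos hsum hB I₀ hI₀⟩
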